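/- arXiv:1305.5305 — 4 statements merged into one kernel-verified Lean document; each statement's English description precedes it below -/
import Mathlib

section
/- Let D > 0, D̂ : ℝ → ℝ differentiable with D̂(t) ≠ 0 for all t, and U : ℝ → ℝ differentiable. Define u(x,t) = U(t + D(x−1)), û(x,t) = U(t + D̂(t)(x−1)), ũ = u − û, and D̃(t) = D − D̂(t). Then for all x ∈ [0,1], t ∈ ℝ: D·∂ũ/∂t(x,t) = ∂ũ/∂x(x,t) − (D̃(t)/D̂(t))·∂û/∂x(x,t) − D̂'(t)·(D/D̂(t))·(x−1)·∂û/∂x(x,t). -/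
/-! By the chain rule every partial derivative of `u` and `û` is `U'` at the shifted time times
the derivative of the shift. For `u` this gives the exact transport law `D ∂ₜu = ∂ₓu`; for `û` the
time derivative carries the factor `1 + D̂'(t)(x - 1)` while the space derivative carries `D̂(t)`,
and the two source terms are that mismatch rewritten through `∂ₓû = U' D̂(t)`. -/

section

variable {𝕜 : Type*} [NontriviallyNormedField 𝕜]

theorem hasDerivAt_comp_add_mul_const {U c : 𝕜 → 𝕜} {U' c' k t : 𝕜}
    (hU : HasDerivAt U U' (t + c t * k)) (hc : HasDerivAt c c' t) :
    HasDerivAt (fun s => U (s + c s * k)) (U' * (1 + c' * k)) t :=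
  hU.comp t ((hasDerivAt_id t).add (hc.mul_const k))

theorem hasDerivAt_comp_const_add_mul_sub_one {U : 𝕜 → 𝕜} {U' c t x : 𝕜}
    (hU : HasDerivAt U U' (t + c * (x - 1))) :
    HasDerivAt (fun y => U (t + c * (y - 1))) (U' * c) x := by
  have hinner : HasDerivAt (fun y : 𝕜 => t + c * (y - 1)) c x := by
    simpa using (((hasDerivAt_id x).sub_const 1).const_mul c).const_add t
  exact hU.comp x hinner

end

theorem statement_5_general (D : ℝ) (Dhat : ℝ → ℝ)
    (hDhat : Differentiable ℝ Dhat) (hDhat0 : ∀ t : ℝ, Dhat t ≠ 0)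
    (U : ℝ → ℝ) (hU : Differentiable ℝ U)
    (u uhat utilde : ℝ → ℝ → ℝ) (Dtilde : ℝ → ℝ)
    (hu : ∀ (x t : ℝ), u x t = U (t + D * (x - 1)))
    (huhat : ∀ (x t : ℝ), uhat x t = U (t + Dhat t * (x - 1)))
    (hutilde : ∀ (x t : ℝ), utilde x t = u x t - uhat x t)
    (hDtilde : ∀ t : ℝ, Dtilde t = D - Dhat t) :
    ∀ x ∈ Set.Icc (0:ℝ) 1, ∀ t : ℝ,
      D * deriv (fun s : ℝ => utilde x s) t =
        deriv (fun y : ℝ => utilde y t) x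
          - (Dtilde t / Dhat t) * deriv (fun y : ℝ => uhat y t) x
          - deriv Dhat t * (D / Dhat t) * (x - 1) * deriv (fun y : ℝ => uhat y t) x := by
  intro x _ t
  have hU_a := (hU (t + D * (x - 1))).hasDerivAt
  have hU_b := (hU (t + Dhat t * (x - 1))).hasDerivAt
  have hu_x := hasDerivAt_comp_const_add_mul_sub_one hU_a
  have huhat_x := hasDerivAt_comp_const_add_mul_sub_one hU_b
  have hu_t := hasDerivAt_comp_add_mul_const (c := fun _ => D) hU_a (hasDerivAt_const t D)
  have huhat_t := hasDerivAt_comp_add_mul_const hU_b (hDhat t).hasDerivAt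
  simp only [hutilde, hu, huhat]
  rw [deriv_fun_sub hu_t.differentiableAt huhat_t.differentiableAt,
    deriv_fun_sub hu_x.differentiableAt huhat_x.differentiableAt,
    hu_t.deriv, huhat_t.deriv, hu_x.deriv, huhat_x.deriv, hDtilde]
  field_simp [hDhat0 t]
  ring

/-- Governing transport equation of the distributed input estimation error
`ũ = u - û`, where `u(x,t) = U(t + D(x-1))` and `û(x,t) = U(t + D̂(t)(x-1))`:
`D ∂ũ/∂t = ∂ũ/∂x - (D̃(t)/D̂(t)) ∂û/∂x - D̂'(t)(D/D̂(t))(x-1) ∂û/∂x`,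
with delay estimation error `D̃(t) = D - D̂(t)`. -/
theorem statement_5 (D : ℝ) (hD : 0 < D) (Dhat : ℝ → ℝ)
    (hDhat : Differentiable ℝ Dhat) (hDhat0 : ∀ t : ℝ, Dhat t ≠ 0)
    (U : ℝ → ℝ) (hU : Differentiable ℝ U)
    (u uhat utilde : ℝ → ℝ → ℝ) (Dtilde : ℝ → ℝ)
    (hu : ∀ (x t : ℝ), u x t = U (t + D * (x - 1)))
    (huhat : ∀ (x t : ℝ), uhat x t = U (t + Dhat t * (x - 1)))
    (hutilde : ∀ (x t : ℝ), utilde x t = u x t - uhat x t)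
    (hDtilde : ∀ t : ℝ, Dtilde t = D - Dhat t) :
    ∀ x ∈ Set.Icc (0:ℝ) 1, ∀ t : ℝ,
      D * deriv (fun s : ℝ => utilde x s) t =
        deriv (fun y : ℝ => utilde y t) x
          - (Dtilde t / Dhat t) * deriv (fun y : ℝ => uhat y t) x
          - deriv Dhat t * (D / Dhat t) * (x - 1) * deriv (fun y : ℝ => uhat y t) x :=
  statement_5_general D Dhat hDhat hDhat0 U hU u uhat utilde Dtilde hu huhat hutilde hDtilde
end

section
/- Fix t ∈ ℝ. Let f : ℝⁿ × ℝ → ℝⁿ be continuously differentiable, D̂(t), D̂'(t) ∈ ℝ, and let p̂(·,t), û(·,t), u(·,t), ∂p̂/∂t(·,t), ∂û/∂t(·,t), ∂p̂/∂x(·,t), ∂û/∂x(·,t) be functions on [0,1] (with values in ℝⁿ or ℝ as appropriate) such that: (a) ∂p̂/∂x(x,t) = D̂(t)·f(p̂(x,t), û(x,t)) for all x; (b) ∂p̂/∂t(x,t) = f(p̂(0,t), u(0,t)) + D̂'(t)∫₀ˣ f(p̂,û) dy + D̂(t)∫₀ˣ [∂f/∂p(p̂,û)·∂p̂/∂t +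 ∂f/∂u(p̂,û)·∂û/∂t] dy for all x; (c) D̂(t)·∂û/∂t(y,t) = (1 + D̂'(t)(y−1))·∂û/∂x(y,t) for all y; and (d) all the maps of y appearing under the integrals are integrable on [0,1]. Define r(x) = D̂(t)·∂p̂/∂t(x,t) − ∂p̂/∂x(x,t). Then for all x ∈ [0,1]: r(x) = D̂(t)·[f(p̂(0,t), u(0,t)) − f(p̂(0,t), û(0,t))] + D̂'(t)D̂(t)·∫₀ˣ f(p̂(y,t), û(y,t)) dy + D̂(t)·∫₀ˣ ∂f/∂p(p̂(y,t), û(y,t))·r(y) dy + D̂'(t)D̂(t)·∫₀ˣ ∂f/∂u(p̂(y,t), û(y,t))·(y−1)·∂û/∂x(y,t) dy, provided additionally that ∂p̂/∂x(x,t) = D̂(t)f(p̂(0,t),û(0,t)) + D̂(t)∫₀ˣ [∂f/∂p(p̂,û)·∂p̂/∂x + ∂f/∂u(p̂,û)·∂û/∂x] dy for all x (the fundamental-theorem-of-calculus expansion of (a)). -/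
/-!
Subtracting the FTC expansion of `∂p̂/∂x` from `D̂` times the Leibniz formula for `∂p̂/∂t`, the
only term that does not already have the Volterra form is `D̂ ∂f/∂u · ∂û/∂t - ∂f/∂u · ∂û/∂x`.
The transport PDE `D̂ ∂û/∂t = (1 + D̂'(y-1)) ∂û/∂x` turns it into `D̂' ∂f/∂u · (y-1) ∂û/∂x`,
and linearity of the derivatives and of the integral does the rest.
-/

open intervalIntegral
open MeasureTheory (volume)

section

variable {E F : Type*} [NormedAddCommGroup E] [NormedSpace ℝ E]
  [NormedAddCommGroup F] [NormedSpace ℝ F]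

lemma smul_apply_add_sub_apply_add_eq_of_transport (A : E →L[ℝ] F) (B : ℝ →L[ℝ] F)
    {D D' y ut ux : ℝ} (pt px : E) (h : D * ut = (1 + D' * (y - 1)) * ux) :
    D • (A pt + B ut) - (A px + B ux) = A (D • pt - px) + D' • B ((y - 1) * ux) := by
  have hB : D • B ut = B ux + D' • B ((y - 1) * ux) := by
    rw [← map_smul, ← map_smul, ← map_add, smul_eq_mul, smul_eq_mul, h]
    ring_nf
  rw [map_sub, map_smul, smul_add, hB]
  abel

lemma smul_integral_sub_integral_eq_of_transport {A : ℝ → E →L[ℝ] F} {B : ℝ → ℝ →L[ℝ] F}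
    {pt px : ℝ → E} {ut ux : ℝ → ℝ} {D D' a b : ℝ}
    (hc : ∀ y ∈ Set.uIcc a b, D * ut y = (1 + D' * (y - 1)) * ux y)
    (hApt : IntervalIntegrable (fun y => A y (pt y)) volume a b)
    (hBut : IntervalIntegrable (fun y => B y (ut y)) volume a b)
    (hApx : IntervalIntegrable (fun y => A y (px y)) volume a b)
    (hBux : IntervalIntegrable (fun y => B y (ux y)) volume a b)
    (hAr : IntervalIntegrable (fun y => A y (D • pt y - px y)) volume a b)
    (hBs : IntervalIntegrable (fun y => B y ((y - 1) * ux y)) volume a b) :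
    D • (∫ y in a..b, (A y (pt y) + B y (ut y))) - ∫ y in a..b, (A y (px y) + B y (ux y))
      = (∫ y in a..b, A y (D • pt y - px y)) + D' • ∫ y in a..b, B y ((y - 1) * ux y) := by
  rw [← integral_smul D fun y => A y (pt y) + B y (ut y), ← integral_sub,
    integral_congr fun y hy => smul_apply_add_sub_apply_add_eq_of_transport
      (A y) (B y) (pt y) (px y) (hc y hy),
    integral_add hAr, integral_smul]
  exacts [hBs.smul D', (hApt.add hBut).smul D, hApx.add hBux]

theorem transport_defect_eq_volterra {A : ℝ → E →L[ℝ] E} {B : ℝ → ℝ →L[ℝ] E}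
    {pt px : ℝ → E} {ut ux : ℝ → ℝ} {D D' x : ℝ} {c c₀ G : E}
    (hpt : pt x = c + D' • G + D • ∫ y in (0:ℝ)..x, (A y (pt y) + B y (ut y)))
    (hpx : px x = D • c₀ + D • ∫ y in (0:ℝ)..x, (A y (px y) + B y (ux y)))
    (hc : ∀ y ∈ Set.uIcc 0 x, D * ut y = (1 + D' * (y - 1)) * ux y)
    (hApt : IntervalIntegrable (fun y => A y (pt y)) volume 0 x)
    (hBut : IntervalIntegrable (fun y => B y (ut y)) volume 0 x)
    (hApx : IntervalIntegrable (fun y => A y (px y)) volume 0 x)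
    (hBux : IntervalIntegrable (fun y => B y (ux y)) volume 0 x)
    (hAr : IntervalIntegrable (fun y => A y (D • pt y - px y)) volume 0 x)
    (hBs : IntervalIntegrable (fun y => B y ((y - 1) * ux y)) volume 0 x) :
    D • pt x - px x = D • (c - c₀) + (D' * D) • G
      + D • (∫ y in (0:ℝ)..x, A y (D • pt y - px y))
      + (D' * D) • ∫ y in (0:ℝ)..x, B y ((y - 1) * ux y) := by
  have hI := smul_integral_sub_integral_eq_of_transport hc hApt hBut hApx hBux hAr hBs
  calc D • pt x - px x
      = D • (c - c₀) + (D' * D) • G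
          + D • (D • (∫ y in (0:ℝ)..x, (A y (pt y) + B y (ut y)))
            - ∫ y in (0:ℝ)..x, (A y (px y) + B y (ux y))) := by
        rw [hpt, hpx, smul_sub, smul_sub, smul_add, smul_add, smul_smul, mul_comm D D']
        abel
    _ = _ := by
        rw [hI, smul_add, smul_smul, mul_comm D D']
        abel

end

theorem statement_8_general (n : ℕ) (f : (Fin n → ℝ) × ℝ → (Fin n → ℝ))
    (Dhat Dhat' : ℝ) (u0 : ℝ)
    (phat phatt phatx : ℝ → (Fin n → ℝ)) (uhat uhatt uhatx : ℝ → ℝ)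
    -- (b) Leibniz formula for the time derivative of the predictor
    (hb : ∀ x ∈ Set.Icc (0:ℝ) 1,
      phatt x = f (phat 0, u0)
        + Dhat' • (∫ y in (0:ℝ)..x, f (phat y, uhat y))
        + Dhat • ∫ y in (0:ℝ)..x,
            (fderiv ℝ (fun p => f (p, uhat y)) (phat y) (phatt y)
              + fderiv ℝ (fun v : ℝ => f (phat y, v)) (uhat y) (uhatt y)))
    -- (c) transport-type PDE of the distributed input estimate
    (hc : ∀ y ∈ Set.Icc (0:ℝ) 1, Dhat * uhatt y = (1 + Dhat' * (y - 1)) * uhatx y)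
    -- (d) integrability of all the maps appearing under the integrals
    (hd2 : IntervalIntegrable
      (fun y => fderiv ℝ (fun p => f (p, uhat y)) (phat y) (phatt y))
      MeasureTheory.volume 0 1)
    (hd3 : IntervalIntegrable
      (fun y => fderiv ℝ (fun v : ℝ => f (phat y, v)) (uhat y) (uhatt y))
      MeasureTheory.volume 0 1)
    (hd4 : IntervalIntegrable
      (fun y => fderiv ℝ (fun p => f (p, uhat y)) (phat y) (phatx y))
      MeasureTheory.volume 0 1)
    (hd5 : IntervalIntegrable
      (fun y => fderiv ℝ (fun v : ℝ => f (phat y, v)) (uhat y) (uhatx y))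
      MeasureTheory.volume 0 1)
    (hd6 : IntervalIntegrable
      (fun y => fderiv ℝ (fun p => f (p, uhat y)) (phat y) (Dhat • phatt y - phatx y))
      MeasureTheory.volume 0 1)
    (hd7 : IntervalIntegrable
      (fun y => fderiv ℝ (fun v : ℝ => f (phat y, v)) (uhat y) ((y - 1) * uhatx y))
      MeasureTheory.volume 0 1)
    -- the fundamental-theorem-of-calculus expansion of (a)
    (hftc : ∀ x ∈ Set.Icc (0:ℝ) 1,
      phatx x = Dhat • f (phat 0, uhat 0)
        + Dhat • ∫ y in (0:ℝ)..x,
            (fderiv ℝ (fun p => f (p, uhat y)) (phat y) (phatx y)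
              + fderiv ℝ (fun v : ℝ => f (phat y, v)) (uhat y) (uhatx y))) :
    ∀ x ∈ Set.Icc (0:ℝ) 1,
      Dhat • phatt x - phatx x =
        Dhat • (f (phat 0, u0) - f (phat 0, uhat 0))
          + (Dhat' * Dhat) • (∫ y in (0:ℝ)..x, f (phat y, uhat y))
          + Dhat • (∫ y in (0:ℝ)..x,
              fderiv ℝ (fun p => f (p, uhat y)) (phat y) (Dhat • phatt y - phatx y))
          + (Dhat' * Dhat) • ∫ y in (0:ℝ)..x,
              fderiv ℝ (fun v : ℝ => f (phat y, v)) (uhat y) ((y - 1) * uhatx y) := by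
  intro x hx
  have hI01 : Set.uIcc (0:ℝ) 1 = Set.Icc 0 1 := Set.uIcc_of_le zero_le_one
  have hsub : Set.uIcc 0 x ⊆ Set.uIcc (0:ℝ) 1 := Set.uIcc_subset_uIcc_left (hI01 ▸ hx)
  exact transport_defect_eq_volterra (hb x hx) (hftc x hx)
    (fun y hy => hc y (hI01 ▸ hsub hy))
    (hd2.mono_set hsub) (hd3.mono_set hsub) (hd4.mono_set hsub) (hd5.mono_set hsub)
    (hd6.mono_set hsub) (hd7.mono_set hsub)

/-- Volterra integral equation for the transport defect
`r(x) = D̂ ∂p̂/∂t(x) - ∂p̂/∂x(x)` of the distributed predictor estimate at a fixed time: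
`r(x) = D̂ [f(p̂(0),u(0)) - f(p̂(0),û(0))] + D̂'D̂ ∫₀ˣ f(p̂,û) dy
  + D̂ ∫₀ˣ ∂f/∂p(p̂,û)·r dy + D̂'D̂ ∫₀ˣ ∂f/∂u(p̂,û)·(y-1)·∂û/∂x dy`. -/
theorem statement_8 (n : ℕ) (f : (Fin n → ℝ) × ℝ → (Fin n → ℝ))
    (hf : ContDiff ℝ 1 f)
    (Dhat Dhat' : ℝ) (u0 : ℝ)
    (phat phatt phatx : ℝ → (Fin n → ℝ)) (uhat uhatt uhatx : ℝ → ℝ)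
    -- (a) spatial ODE of the predictor
    (ha : ∀ x ∈ Set.Icc (0:ℝ) 1, phatx x = Dhat • f (phat x, uhat x))
    -- (b) Leibniz formula for the time derivative of the predictor
    (hb : ∀ x ∈ Set.Icc (0:ℝ) 1,
      phatt x = f (phat 0, u0)
        + Dhat' • (∫ y in (0:ℝ)..x, f (phat y, uhat y))
        + Dhat • ∫ y in (0:ℝ)..x,
            (fderiv ℝ (fun p => f (p, uhat y)) (phat y) (phatt y)
              + fderiv ℝ (fun v : ℝ => f (phat y, v)) (uhat y) (uhatt y)))
    -- (c) transport-type PDE of the distributed input estimate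
    (hc : ∀ y ∈ Set.Icc (0:ℝ) 1, Dhat * uhatt y = (1 + Dhat' * (y - 1)) * uhatx y)
    -- (d) integrability of all the maps appearing under the integrals
    (hd1 : IntervalIntegrable (fun y => f (phat y, uhat y)) MeasureTheory.volume 0 1)
    (hd2 : IntervalIntegrable
      (fun y => fderiv ℝ (fun p => f (p, uhat y)) (phat y) (phatt y))
      MeasureTheory.volume 0 1)
    (hd3 : IntervalIntegrable
      (fun y => fderiv ℝ (fun v : ℝ => f (phat y, v)) (uhat y) (uhatt y))
      MeasureTheory.volume 0 1)
    (hd4 : IntervalIntegrable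
      (fun y => fderiv ℝ (fun p => f (p, uhat y)) (phat y) (phatx y))
      MeasureTheory.volume 0 1)
    (hd5 : IntervalIntegrable
      (fun y => fderiv ℝ (fun v : ℝ => f (phat y, v)) (uhat y) (uhatx y))
      MeasureTheory.volume 0 1)
    (hd6 : IntervalIntegrable
      (fun y => fderiv ℝ (fun p => f (p, uhat y)) (phat y) (Dhat • phatt y - phatx y))
      MeasureTheory.volume 0 1)
    (hd7 : IntervalIntegrable
      (fun y => fderiv ℝ (fun v : ℝ => f (phat y, v)) (uhat y) ((y - 1) * uhatx y))
      MeasureTheory.volume 0 1)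
    -- the fundamental-theorem-of-calculus expansion of (a)
    (hftc : ∀ x ∈ Set.Icc (0:ℝ) 1,
      phatx x = Dhat • f (phat 0, uhat 0)
        + Dhat • ∫ y in (0:ℝ)..x,
            (fderiv ℝ (fun p => f (p, uhat y)) (phat y) (phatx y)
              + fderiv ℝ (fun v : ℝ => f (phat y, v)) (uhat y) (uhatx y))) :
    ∀ x ∈ Set.Icc (0:ℝ) 1,
      Dhat • phatt x - phatx x =
        Dhat • (f (phat 0, u0) - f (phat 0, uhat 0))
          + (Dhat' * Dhat) • (∫ y in (0:ℝ)..x, f (phat y, uhat y))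
          + Dhat • (∫ y in (0:ℝ)..x,
              fderiv ℝ (fun p => f (p, uhat y)) (phat y) (Dhat • phatt y - phatx y))
          + (Dhat' * Dhat) • ∫ y in (0:ℝ)..x,
              fderiv ℝ (fun v : ℝ => f (phat y, v)) (uhat y) ((y - 1) * uhatx y) :=
  statement_8_general n f Dhat Dhat' u0 phat phatt phatx uhat uhatt uhatx hb hc hd2 hd3 hd4 hd5 hd6
    hd7 hftc
end

section
/- Fix (x,t) ∈ [0,1] × ℝ. Let κ : ℝⁿ → ℝ be differentiable, and suppose: (a) û is differentiable in t and x at (x,t) with D̂(t)·∂û/∂t(x,t) = ∂û/∂x(x,t) + D̂'(t)(x−1)·∂û/∂x(x,t); (b) p̂ is differentiable in t and x at (x,t) with D̂(t)·∂p̂/∂t(x,t) = ∂p̂/∂x(x,t) + Φ(x,0)·D̂(t)·f_ũ(t) + D̂'(t)D̂(t)·∫₀ˣ Φ(x,y)·[f(p̂(y,t),û(y,t)) + ∂f/∂u(p̂(y,t),û(y,t))·(y−1)·∂û/∂x(y,t)] dy; and define ŵ(x,t) = û(x,t) − κ(p̂(x,t)). Then D̂(t)·∂ŵ/∂t(x,t)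 = ∂ŵ/∂x(x,t) + D̂'(t)·(x−1)·∂û/∂x(x,t) − Dκ(p̂(x,t))·[ Φ(x,0)·D̂(t)·f_ũ(t) + D̂'(t)D̂(t)·∫₀ˣ Φ(x,y)·( f(p̂(y,t),û(y,t)) + ∂f/∂u(p̂(y,t),û(y,t))·(y−1)·∂û/∂x(y,t) ) dy ], where Dκ denotes the derivative of κ. -/
attribute [local instance] Matrix.normedAddCommGroup Matrix.normedSpace

theorem deriv_sub_comp {𝕜 E F : Type*} [NontriviallyNormedField 𝕜]
    [NormedAddCommGroup E] [NormedSpace 𝕜 E] [NormedAddCommGroup F] [NormedSpace 𝕜 F]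
    {g : 𝕜 → F} {q : 𝕜 → E} {κ : E → F} {s : 𝕜}
    (hg : DifferentiableAt 𝕜 g s) (hκ : DifferentiableAt 𝕜 κ (q s))
    (hq : DifferentiableAt 𝕜 q s) :
    deriv (fun s => g s - κ (q s)) s = deriv g s - fderiv 𝕜 κ (q s) (deriv q s) :=
  (hg.hasDerivAt.sub (hκ.hasFDerivAt.comp_hasDerivAt s hq.hasDerivAt)).deriv

theorem statement_12_general (n : ℕ) (f : (Fin n → ℝ) × ℝ → (Fin n → ℝ))
    (κ : (Fin n → ℝ) → ℝ) (hκ : Differentiable ℝ κ)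
    (x t : ℝ)
    (Dhat Dhat' : ℝ) (uhat : ℝ → ℝ → ℝ) (phat : ℝ → ℝ → (Fin n → ℝ))
    (futilde : Fin n → ℝ)
    (Φ : ℝ → ℝ → Matrix (Fin n) (Fin n) ℝ)
    -- (a) û is differentiable in t and x at (x,t) and satisfies its transport equation
    (huhat_t : DifferentiableAt ℝ (fun s : ℝ => uhat x s) t)
    (huhat_x : DifferentiableAt ℝ (fun y : ℝ => uhat y t) x)
    (ha : Dhat * deriv (fun s : ℝ => uhat x s) t =
      deriv (fun y : ℝ => uhat y t) x
        + Dhat' * (x - 1) * deriv (fun y : ℝ => uhat y t) x)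
    -- (b) p̂ is differentiable in t and x at (x,t) and satisfies its governing equation
    (hphat_t : DifferentiableAt ℝ (fun s : ℝ => phat x s) t)
    (hphat_x : DifferentiableAt ℝ (fun y : ℝ => phat y t) x)
    (hb : Dhat • deriv (fun s : ℝ => phat x s) t =
      deriv (fun y : ℝ => phat y t) x
        + (Φ x 0).mulVec (Dhat • futilde)
        + (Dhat' * Dhat) • ∫ y in (0:ℝ)..x,
            (Φ x y).mulVec
              (f (phat y t, uhat y t)
                + fderiv ℝ (fun v : ℝ => f (phat y t, v)) (uhat y t)
                    ((y - 1) * deriv (fun z : ℝ => uhat z t) y)))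
    (what : ℝ → ℝ → ℝ)
    (hwhat : ∀ (x' t' : ℝ), what x' t' = uhat x' t' - κ (phat x' t')) :
    Dhat * deriv (fun s : ℝ => what x s) t =
      deriv (fun y : ℝ => what y t) x
        + Dhat' * (x - 1) * deriv (fun y : ℝ => uhat y t) x
        - fderiv ℝ κ (phat x t)
            ((Φ x 0).mulVec (Dhat • futilde)
              + (Dhat' * Dhat) • ∫ y in (0:ℝ)..x,
                  (Φ x y).mulVec
                    (f (phat y t, uhat y t)
                      + fderiv ℝ (fun v : ℝ => f (phat y t, v)) (uhat y t)
                          ((y - 1) * deriv (fun z : ℝ => uhat z t) y))) := by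
  obtain rfl : what = fun x' t' => uhat x' t' - κ (phat x' t') := funext₂ hwhat
  rw [deriv_sub_comp huhat_t (hκ _) hphat_t, deriv_sub_comp huhat_x (hκ _) hphat_x]
  rw [add_assoc] at hb
  have hb_κ := congrArg (fderiv ℝ κ (phat x t)) hb
  rw [map_smul, map_add, smul_eq_mul] at hb_κ
  linear_combination ha - hb_κ

/-- Governing transport-type equation of the backstepping variable
`ŵ(x,t) = û(x,t) - κ(p̂(x,t))`: from the governing equations of `û` and `p̂`
one gets, by the chain rule,
`D̂ ∂ŵ/∂t = ∂ŵ/∂x + D̂'(x-1)∂û/∂x - Dκ(p̂)[Φ(x,0) D̂ f_ũ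
  + D̂'D̂ ∫₀ˣ Φ(x,y)(f(p̂,û) + ∂f/∂u(p̂,û)(y-1)∂û/∂x) dy]`. -/
theorem statement_12 (n : ℕ) (f : (Fin n → ℝ) × ℝ → (Fin n → ℝ))
    (κ : (Fin n → ℝ) → ℝ) (hκ : Differentiable ℝ κ)
    (x t : ℝ) (hx : x ∈ Set.Icc (0:ℝ) 1)
    (Dhat Dhat' : ℝ) (u uhat : ℝ → ℝ → ℝ) (phat : ℝ → ℝ → (Fin n → ℝ))
    (futilde : Fin n → ℝ)
    (hfutilde : futilde = f (phat 0 t, u 0 t) - f (phat 0 t, uhat 0 t))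
    (Φ : ℝ → ℝ → Matrix (Fin n) (Fin n) ℝ)
    -- (a) û is differentiable in t and x at (x,t) and satisfies its transport equation
    (huhat_t : DifferentiableAt ℝ (fun s : ℝ => uhat x s) t)
    (huhat_x : DifferentiableAt ℝ (fun y : ℝ => uhat y t) x)
    (ha : Dhat * deriv (fun s : ℝ => uhat x s) t =
      deriv (fun y : ℝ => uhat y t) x
        + Dhat' * (x - 1) * deriv (fun y : ℝ => uhat y t) x)
    -- (b) p̂ is differentiable in t and x at (x,t) and satisfies its governing equation
    (hphat_t : DifferentiableAt ℝ (fun s : ℝ => phat x s) t)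
    (hphat_x : DifferentiableAt ℝ (fun y : ℝ => phat y t) x)
    (hb : Dhat • deriv (fun s : ℝ => phat x s) t =
      deriv (fun y : ℝ => phat y t) x
        + (Φ x 0).mulVec (Dhat • futilde)
        + (Dhat' * Dhat) • ∫ y in (0:ℝ)..x,
            (Φ x y).mulVec
              (f (phat y t, uhat y t)
                + fderiv ℝ (fun v : ℝ => f (phat y t, v)) (uhat y t)
                    ((y - 1) * deriv (fun z : ℝ => uhat z t) y)))
    (what : ℝ → ℝ → ℝ)
    (hwhat : ∀ (x' t' : ℝ), what x' t' = uhat x' t' - κ (phat x' t')) :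
    Dhat * deriv (fun s : ℝ => what x s) t =
      deriv (fun y : ℝ => what y t) x
        + Dhat' * (x - 1) * deriv (fun y : ℝ => uhat y t) x
        - fderiv ℝ κ (phat x t)
            ((Φ x 0).mulVec (Dhat • futilde)
              + (Dhat' * Dhat) • ∫ y in (0:ℝ)..x,
                  (Φ x y).mulVec
                    (f (phat y t, uhat y t)
                      + fderiv ℝ (fun v : ℝ => f (phat y t, v)) (uhat y t)
                          ((y - 1) * deriv (fun z : ℝ => uhat z t) y))) :=
  statement_12_general n f κ hκ x t Dhat Dhat' uhat phat futilde Φ huhat_t huhat_x ha hphat_t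
    hphat_x hb what hwhat
end

section
/- Let f : ℝⁿ × ℝ → ℝⁿ be continuous, U : ℝ → ℝ continuous, D > 0, and let X : ℝ → ℝⁿ be differentiable with X'(s) = f(X(s), U(s−D)) for all s ∈ ℝ. Define u(x,t) = U(t + D(x−1)) and p(x,t) = X(t + Dx) for x ∈ [0,1], t ∈ ℝ. Then for all x ∈ [0,1] and t ∈ ℝ: p(x,t) = X(t) + D·∫₀ˣ f(p(y,t), u(y,t)) dy. -/
/-! Along the ray `y ↦ t + D y` the predictor is the solution itself, so the fundamental
theorem of calculus on `[t, t + D x]` followed by the substitution `s = t + D y` gives the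
fixed-point equation. -/

theorem eq_add_smul_integral_comp_mul_add {E : Type*} [NormedAddCommGroup E] [NormedSpace ℝ E]
    [CompleteSpace E] {g g' : ℝ → E} (hg : ∀ s, HasDerivAt g (g' s) s) (hg' : Continuous g')
    (t D x : ℝ) :
    g (t + D * x) = g t + D • ∫ y in (0:ℝ)..x, g' (D * y + t) := by
  have hFTC : ∫ s in t..t + D * x, g' s = g (t + D * x) - g t :=
    intervalIntegral.integral_eq_sub_of_hasDerivAt (fun s _ => hg s) (hg'.intervalIntegrable _ _)
  rw [intervalIntegral.smul_integral_comp_mul_add, mul_zero, zero_add, add_comm (D * x), hFTC]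
  abel

theorem statement_16_general (n : ℕ) (f : (Fin n → ℝ) × ℝ → (Fin n → ℝ)) (hf : Continuous f)
    (U : ℝ → ℝ) (hU : Continuous U) (D : ℝ)
    (X : ℝ → (Fin n → ℝ)) (hX : ∀ s : ℝ, HasDerivAt X (f (X s, U (s - D))) s)
    (u : ℝ → ℝ → ℝ) (p : ℝ → ℝ → (Fin n → ℝ))
    (hu : ∀ (x t : ℝ), u x t = U (t + D * (x - 1)))
    (hp : ∀ (x t : ℝ), p x t = X (t + D * x)) :
    ∀ x ∈ Set.Icc (0:ℝ) 1, ∀ t : ℝ,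
      p x t = X t + D • ∫ y in (0:ℝ)..x, f (p y t, u y t) := by
  intro x _ t
  have hXcont : Continuous X := continuous_iff_continuousAt.2 fun s => (hX s).continuousAt
  have hrhs : Continuous fun s => f (X s, U (s - D)) := by fun_prop
  have hintegrand : ∀ y, f (p y t, u y t) = f (X (D * y + t), U (D * y + t - D)) := fun y => by
    rw [hp, hu, add_comm t]
    ring_nf
  simp only [hintegrand]
  rw [hp]
  exact eq_add_smul_integral_comp_mul_add hX hrhs t D x

/-- The exact distributed predictor: for the input-delay plant `Ẋ(s) = f(X(s), U(s-D))`,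
the `Dx`-ahead prediction `p(x,t) = X(t + Dx)` satisfies the fixed-point integral
equation `p(x,t) = X(t) + D ∫₀ˣ f(p(y,t), u(y,t)) dy`, where `u(x,t) = U(t + D(x-1))`. -/
theorem statement_16 (n : ℕ) (f : (Fin n → ℝ) × ℝ → (Fin n → ℝ)) (hf : Continuous f)
    (U : ℝ → ℝ) (hU : Continuous U) (D : ℝ) (hD : 0 < D)
    (X : ℝ → (Fin n → ℝ)) (hX : ∀ s : ℝ, HasDerivAt X (f (X s, U (s - D))) s)
    (u : ℝ → ℝ → ℝ) (p : ℝ → ℝ → (Fin n → ℝ))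
    (hu : ∀ (x t : ℝ), u x t = U (t + D * (x - 1)))
    (hp : ∀ (x t : ℝ), p x t = X (t + D * x)) :
    ∀ x ∈ Set.Icc (0:ℝ) 1, ∀ t : ℝ,
      p x t = X t + D • ∫ y in (0:ℝ)..x, f (p y t, u y t) :=
  statement_16_general n f hf U hU D X hX u p hu hp
end
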